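/- Consider the two Markov chains on V = {a,b,c} with edges E = {(a,b),(a,c),(b,c),(c,b)}: both jump between b and c at rate 1, the first jumps from a to b at rate 2 with R(a,c)=0, the second jumps from a to c at rate 2 with R(a,b)=0. Then for every probability measure μ and every flow J on E, the measure-current rate functionals coincide: I(μ,J) = I'(μ,J). In particular, a flow J is divergence-free (for either chain's edge set viewed inside E) iff J(a,b)=J(a,c)=0 and J(b,c)=J(c,b), and in that case I(μ,J) = 2μ_a + Φ(J(b,c),μ_b) + Φ(J(b,c),μ_c). -/

import Mathlib

/-!
Nothing flows into `a`, so for a nonnegative divergence-free current the outflow from `a`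
vanishes and `J` lives on the cycle `b ⇄ c`, which both chains share with the same rates.
The remaining edge out of `a` then carries zero current and contributes `Φ(0, 2 μ_a) = 2 μ_a`,
whichever of `b`, `c` it points to.
-/

noncomputable def Phi (q p : ℝ) : EReal :=
  if q = 0 then (p : EReal)
  else if p = 0 then ⊤
  else ((q * Real.log (q / p) - (q - p) : ℝ) : EReal)

open scoped Classical in
/-- Measure-current (BFG) rate functional of the chain with rates `R`:
`∑_{(x,y) : R(x,y)>0} Φ(J(x,y), μ(x)R(x,y))` if `J` is divergence-free and
supported on the edge set of `R`, and `+∞` otherwise. -/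
noncomputable def BFG {V : Type*} [Fintype V]
    (R : V → V → ℝ) (μ : V → ℝ) (J : V → V → ℝ) : EReal :=
  if (∀ x, ∑ y, J x y = ∑ y, J y x) ∧ (∀ x y, J x y ≠ 0 → 0 < R x y) then
    ∑ x, ∑ y, (if 0 < R x y then Phi (J x y) (μ x * R x y) else 0)
  else ⊤

/-- First chain on `{a,b,c} = {0,1,2}`: `b ↔ c` at rate 1, `a → b` at rate 2. -/
noncomputable def R1 : Fin 3 → Fin 3 → ℝ := fun x y =>
  if (x, y) = (1, 2) ∨ (x, y) = (2, 1) then 1 else if (x, y) = (0, 1) then 2 else 0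

/-- Second chain: `b ↔ c` at rate 1, `a → c` at rate 2. -/
noncomputable def R2 : Fin 3 → Fin 3 → ℝ := fun x y =>
  if (x, y) = (1, 2) ∨ (x, y) = (2, 1) then 1 else if (x, y) = (0, 2) then 2 else 0

lemma Phi_zero_left (p : ℝ) : Phi 0 p = p := if_pos rfl

def IsSupportedOnE (J : Fin 3 → Fin 3 → ℝ) : Prop :=
  ∀ x y : Fin 3, J x y ≠ 0 →
    (x, y) = (0, 1) ∨ (x, y) = (0, 2) ∨ (x, y) = (1, 2) ∨ (x, y) = (2, 1)

section Flow

variable {J : Fin 3 → Fin 3 → ℝ}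

lemma flow_eq_zero_off_edges (hJE : IsSupportedOnE J) {x y : Fin 3}
    (h : ¬ ((x, y) = (0, 1) ∨ (x, y) = (0, 2) ∨ (x, y) = (1, 2) ∨ (x, y) = (2, 1))) :
    J x y = 0 :=
  not_not.mp (mt (hJE x y) h)

lemma divergenceFree_iff (hJE : IsSupportedOnE J) (hJ0 : ∀ x y, 0 ≤ J x y) :
    (∀ x, ∑ y, J x y = ∑ y, J y x) ↔ J 0 1 = 0 ∧ J 0 2 = 0 ∧ J 1 2 = J 2 1 := by
  have h00 : J 0 0 = 0 := flow_eq_zero_off_edges hJE (by decide)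
  have h10 : J 1 0 = 0 := flow_eq_zero_off_edges hJE (by decide)
  have h11 : J 1 1 = 0 := flow_eq_zero_off_edges hJE (by decide)
  have h20 : J 2 0 = 0 := flow_eq_zero_off_edges hJE (by decide)
  have h22 : J 2 2 = 0 := flow_eq_zero_off_edges hJE (by decide)
  simp only [Fin.forall_fin_succ, Fin.sum_univ_three, IsEmpty.forall_iff, and_true,
    Fin.succ_zero_eq_one, Fin.succ_one_eq_two, h00, h10, h11, h20, h22, zero_add, add_zero]
  have hab := hJ0 0 1
  have hac := hJ0 0 2
  constructor
  · rintro ⟨ha, hb, -⟩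
    exact ⟨by linarith, by linarith, by linarith⟩
  · rintro ⟨h01, h02, h12⟩
    exact ⟨by linarith, by linarith, by linarith⟩

lemma support_R1_iff (hJE : IsSupportedOnE J) :
    (∀ x y, J x y ≠ 0 → 0 < R1 x y) ↔ J 0 2 = 0 := by
  refine ⟨fun h => by_contra fun h02 => by simpa [R1] using h 0 2 h02, fun h02 x y hxy => ?_⟩
  rcases hJE x y hxy with h | h | h | h <;> simp_all [R1]

lemma support_R2_iff (hJE : IsSupportedOnE J) :
    (∀ x y, J x y ≠ 0 → 0 < R2 x y) ↔ J 0 1 = 0 := by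
  refine ⟨fun h => by_contra fun h01 => by simpa [R2] using h 0 1 h01, fun h01 x y hxy => ?_⟩
  rcases hJE x y hxy with h | h | h | h <;> simp_all [R2]

lemma flowCondition_R1_iff (hJE : IsSupportedOnE J) (hJ0 : ∀ x y, 0 ≤ J x y) :
    ((∀ x, ∑ y, J x y = ∑ y, J y x) ∧ (∀ x y, J x y ≠ 0 → 0 < R1 x y)) ↔
      (J 0 1 = 0 ∧ J 0 2 = 0 ∧ J 1 2 = J 2 1) := by
  rw [divergenceFree_iff hJE hJ0, support_R1_iff hJE]
  tauto

lemma BFG_R1_eq (hJE : IsSupportedOnE J) (hJ0 : ∀ x y, 0 ≤ J x y) (μ : Fin 3 → ℝ)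
    (hC : J 0 1 = 0 ∧ J 0 2 = 0 ∧ J 1 2 = J 2 1) :
    BFG R1 μ J = ((2 * μ 0 : ℝ) : EReal) + Phi (J 1 2) (μ 1) + Phi (J 1 2) (μ 2) := by
  obtain ⟨h01, h02, h12⟩ := hC
  rw [BFG, if_pos ((flowCondition_R1_iff hJE hJ0).mpr ⟨h01, h02, h12⟩), mul_comm 2 (μ 0)]
  simp [Fin.sum_univ_three, R1, h01, h12, Phi_zero_left]

lemma flowCondition_R2_iff (hJE : IsSupportedOnE J) (hJ0 : ∀ x y, 0 ≤ J x y) :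
    ((∀ x, ∑ y, J x y = ∑ y, J y x) ∧ (∀ x y, J x y ≠ 0 → 0 < R2 x y)) ↔
      (J 0 1 = 0 ∧ J 0 2 = 0 ∧ J 1 2 = J 2 1) := by
  rw [divergenceFree_iff hJE hJ0, support_R2_iff hJE]
  tauto

lemma BFG_R2_eq (hJE : IsSupportedOnE J) (hJ0 : ∀ x y, 0 ≤ J x y) (μ : Fin 3 → ℝ)
    (hC : J 0 1 = 0 ∧ J 0 2 = 0 ∧ J 1 2 = J 2 1) :
    BFG R2 μ J = ((2 * μ 0 : ℝ) : EReal) + Phi (J 1 2) (μ 1) + Phi (J 1 2) (μ 2) := by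
  obtain ⟨h01, h02, h12⟩ := hC
  rw [BFG, if_pos ((flowCondition_R2_iff hJE hJ0).mpr ⟨h01, h02, h12⟩), mul_comm 2 (μ 0)]
  simp [Fin.sum_univ_three, R2, h02, h12, Phi_zero_left]

end Flow

theorem stmt_16_general (μ : Fin 3 → ℝ)
    (J : Fin 3 → Fin 3 → ℝ) (hJ0 : ∀ x y, 0 ≤ J x y)
    -- `J` is a flow on `E = {(a,b),(a,c),(b,c),(c,b)}`
    (hJE : ∀ x y : Fin 3, J x y ≠ 0 →
      (x, y) = (0, 1) ∨ (x, y) = (0, 2) ∨ (x, y) = (1, 2) ∨ (x, y) = (2, 1)) :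
    -- the two rate functionals coincide
    BFG R1 μ J = BFG R2 μ J ∧
    -- `J` is divergence-free and supported on the edge set of `R1` iff
    -- `J(a,b) = J(a,c) = 0` and `J(b,c) = J(c,b)`
    (((∀ x, ∑ y, J x y = ∑ y, J y x) ∧ (∀ x y, J x y ≠ 0 → 0 < R1 x y)) ↔
      (J 0 1 = 0 ∧ J 0 2 = 0 ∧ J 1 2 = J 2 1)) ∧
    -- and in that case the common value is `2 μ_a + Φ(J_{bc}, μ_b) + Φ(J_{bc}, μ_c)`
    ((J 0 1 = 0 ∧ J 0 2 = 0 ∧ J 1 2 = J 2 1) →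
      BFG R1 μ J
        = ((2 * μ 0 : ℝ) : EReal) + Phi (J 1 2) (μ 1) + Phi (J 1 2) (μ 2)) := by
  have hR1 := flowCondition_R1_iff hJE hJ0
  refine ⟨?_, hR1, BFG_R1_eq hJE hJ0 μ⟩
  by_cases hC : J 0 1 = 0 ∧ J 0 2 = 0 ∧ J 1 2 = J 2 1
  · rw [BFG_R1_eq hJE hJ0 μ hC, BFG_R2_eq hJE hJ0 μ hC]
  · rw [BFG, BFG, if_neg (mt hR1.mp hC), if_neg (mt (flowCondition_R2_iff hJE hJ0).mp hC)]

theorem stmt_16 (μ : Fin 3 → ℝ) (hμ0 : ∀ x, 0 ≤ μ x) (hμ1 : ∑ x, μ x = 1)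
    (J : Fin 3 → Fin 3 → ℝ) (hJ0 : ∀ x y, 0 ≤ J x y)
    -- `J` is a flow on `E = {(a,b),(a,c),(b,c),(c,b)}`
    (hJE : ∀ x y : Fin 3, J x y ≠ 0 →
      (x, y) = (0, 1) ∨ (x, y) = (0, 2) ∨ (x, y) = (1, 2) ∨ (x, y) = (2, 1)) :
    -- the two rate functionals coincide
    BFG R1 μ J = BFG R2 μ J ∧
    -- `J` is divergence-free and supported on the edge set of `R1` iff
    -- `J(a,b) = J(a,c) = 0` and `J(b,c) = J(c,b)`
    (((∀ x, ∑ y, J x y = ∑ y, J y x) ∧ (∀ x y, J x y ≠ 0 → 0 < R1 x y)) ↔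
      (J 0 1 = 0 ∧ J 0 2 = 0 ∧ J 1 2 = J 2 1)) ∧
    -- and in that case the common value is `2 μ_a + Φ(J_{bc}, μ_b) + Φ(J_{bc}, μ_c)`
    ((J 0 1 = 0 ∧ J 0 2 = 0 ∧ J 1 2 = J 2 1) →
      BFG R1 μ J
        = ((2 * μ 0 : ℝ) : EReal) + Phi (J 1 2) (μ 1) + Phi (J 1 2) (μ 2)) :=
  stmt_16_general μ J hJ0 hJE
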